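/- Let w : A × A → [0,∞) be a symmetric weight function on a finite set A with w(x,x) = 0, and assume the weighted graph (A, w) is connected (i.e., between any two points there is a path along edges of positive weight). For x ≠ y, define the effective resistance R(x,y) = ( min{ E(f) : f : A → ℝ, f(x) = 0, f(y) = 1 } )^{−1}, where E(f) = (1/2) Σ_{u,v ∈ A} w(u,v)(f(u) − f(v))², and set R(x,x) = 0. Then R is a metric on A; in particular R satisfies the triangle inequality R(x,z) ≤ R(x,y) + R(y,z). -/

import Mathlib

/-!
An energy minimizer `g` for the boundary values `g x = 0`, `g y = 1` exists by compactness, since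
clamping a potential to `[0, 1]` does not increase its energy; connectivity makes its energy
`m(x, y)` positive. The first variation of the energy at `g` gives `E(f, g) = m(x, y) (f y - f x)`
for every `f`, where `E` is the energy form. Superposing the minimizers for `(x, y)` and `(y, z)`,
scaled by `m(x, y)⁻¹` and `m(y, z)⁻¹`, gives `u` with `E(f, u) = f z - f x`; Cauchy–Schwarz for `E`
then yields `R(x, z) ≤ E(u, u) = u z - u x`, which is at most `R(x, y) + R(y, z)` because both
minimizers take values in `[0, 1]`.
-/

section ElectricalNetwork

variable {V : Type*} [Fintype V] (w : V → V → ℝ)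

noncomputable def energy (f : V → ℝ) : ℝ :=
  (1 / 2) * ∑ u, ∑ v, w u v * (f u - f v) ^ 2

noncomputable def energyForm : LinearMap.BilinForm ℝ (V → ℝ) :=
  LinearMap.mk₂ ℝ (fun f g => (1 / 2) * ∑ u, ∑ v, w u v * (f u - f v) * (g u - g v))
    (fun f₁ f₂ g => by
      simp only [Pi.add_apply, ← mul_add, ← Finset.sum_add_distrib]
      congr! 3; ring)
    (fun c f g => by
      simp only [Pi.smul_apply, smul_eq_mul, Finset.mul_sum]
      exact Finset.sum_congr rfl fun u _ => Finset.sum_congr rfl fun v _ => by ring)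
    (fun f g₁ g₂ => by
      simp only [Pi.add_apply, ← mul_add, ← Finset.sum_add_distrib]
      congr! 3; ring)
    (fun c f g => by
      simp only [Pi.smul_apply, smul_eq_mul, Finset.mul_sum]
      exact Finset.sum_congr rfl fun u _ => Finset.sum_congr rfl fun v _ => by ring)

noncomputable def minEnergy (x y : V) : ℝ :=
  sInf {e : ℝ | ∃ f : V → ℝ, f x = 0 ∧ f y = 1 ∧ e = energy w f}

noncomputable def effectiveResistance [DecidableEq V] (x y : V) : ℝ :=
  if x = y then 0 else (minEnergy w x y)⁻¹

structure IsEnergyMinimizer (x y : V) (g : V → ℝ) : Prop where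
  eq_zero : g x = 0
  eq_one : g y = 1
  energy_le : ∀ f : V → ℝ, f x = 0 → f y = 1 → energy w g ≤ energy w f

variable {w}

theorem energy_nonneg (hw : ∀ u v, 0 ≤ w u v) (f : V → ℝ) : 0 ≤ energy w f := by
  unfold energy
  have := Finset.sum_nonneg fun u (_ : u ∈ Finset.univ) => Finset.sum_nonneg
    fun v (_ : v ∈ Finset.univ) => mul_nonneg (hw u v) (sq_nonneg (f u - f v))
  positivity

theorem energyForm_self (f : V → ℝ) : energyForm w f f = energy w f := by
  simp only [energyForm, energy, LinearMap.mk₂_apply]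
  congr! 3; ring

theorem energyForm_comm (f g : V → ℝ) : energyForm w f g = energyForm w g f := by
  simp only [energyForm, LinearMap.mk₂_apply]
  congr! 3; ring

theorem energyForm_one_left (g : V → ℝ) : energyForm w 1 g = 0 := by
  simp [energyForm]

theorem energy_add_smul (f g : V → ℝ) (t : ℝ) :
    energy w (f + t • g) = energy w f + 2 * t * energyForm w f g + t ^ 2 * energy w g := by
  simp only [← energyForm_self, map_add, map_smul, LinearMap.add_apply, LinearMap.smul_apply,
    smul_eq_mul, energyForm_comm g f]
  ring

theorem energy_one_sub (f : V → ℝ) : energy w (1 - f) = energy w f := by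
  simp only [← energyForm_self, map_sub, LinearMap.sub_apply, energyForm_one_left,
    energyForm_comm f 1]
  ring

theorem energyForm_sq_le (hw : ∀ u v, 0 ≤ w u v) (f g : V → ℝ) :
    energyForm w f g ^ 2 ≤ energy w f * energy w g := by
  have h := discrim_le_zero (a := energy w g) (b := 2 * energyForm w f g) (c := energy w f)
    fun t => by
      have := energy_nonneg hw (f + t • g)
      rw [energy_add_smul] at this
      linarith
  rw [discrim] at h
  linarith

theorem energy_comp_le (hw : ∀ u v, 0 ≤ w u v) {φ : ℝ → ℝ} (hφ : LipschitzWith 1 φ)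
    (f : V → ℝ) : energy w (φ ∘ f) ≤ energy w f := by
  have hsq : ∀ a b, (φ a - φ b) ^ 2 ≤ (a - b) ^ 2 := fun a b =>
    sq_le_sq.2 (by simpa [Real.dist_eq] using hφ.dist_le_mul a b)
  unfold energy
  gcongr (1 / 2) * ?_
  exact Finset.sum_le_sum fun u _ => Finset.sum_le_sum fun v _ =>
    mul_le_mul_of_nonneg_left (hsq _ _) (hw u v)

theorem continuous_energy : Continuous (energy w) := by
  unfold energy
  fun_prop

theorem exists_isEnergyMinimizer (hw : ∀ u v, 0 ≤ w u v) {x y : V} (hxy : x ≠ y) :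
    ∃ g, IsEnergyMinimizer w x y g ∧ ∀ v, g v ∈ Set.Icc 0 1 := by
  classical
  set K : Set (V → ℝ) := Set.univ.pi (fun _ => Set.Icc 0 1) ∩ {f | f x = 0} ∩ {f | f y = 1}
  have hK : IsCompact K :=
    ((isCompact_univ_pi fun _ => isCompact_Icc).inter_right
      (isClosed_eq (continuous_apply x) continuous_const)).inter_right
      (isClosed_eq (continuous_apply y) continuous_const)
  have hK₀ : (Pi.single y 1 : V → ℝ) ∈ K :=
    ⟨⟨fun v _ => by by_cases h : v = y <;> simp [h], by simp [hxy]⟩, by simp⟩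
  obtain ⟨g, ⟨⟨hg01, hgx⟩, hgy⟩, hmin⟩ :=
    hK.exists_isMinOn ⟨_, hK₀⟩ continuous_energy.continuousOn
  refine ⟨g, ⟨hgx, hgy, fun f hfx hfy => ?_⟩, fun v => hg01 v trivial⟩
  set clamp : ℝ → ℝ := fun t => max 0 (min t 1)
  have hclamp : LipschitzWith 1 clamp := (LipschitzWith.id.min_const 1).const_max 0
  have hK_clamp : clamp ∘ f ∈ K :=
    ⟨⟨fun v _ => ⟨le_max_left _ _, max_le zero_le_one (min_le_right _ _)⟩,
      by simp [clamp, hfx]⟩, by simp [clamp, hfy]⟩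
  exact (hmin hK_clamp).trans (energy_comp_le hw hclamp f)

theorem eq_of_energy_eq_zero (hw : ∀ u v, 0 ≤ w u v) {f : V → ℝ} (hf : energy w f = 0)
    {x y : V} (hpath : Relation.ReflTransGen (fun u v => 0 < w u v) x y) : f x = f y := by
  have hnonneg : ∀ u v, 0 ≤ w u v * (f u - f v) ^ 2 := fun u v =>
    mul_nonneg (hw u v) (sq_nonneg _)
  have hsum : ∑ u, ∑ v, w u v * (f u - f v) ^ 2 = 0 := by
    unfold energy at hf; linarith
  have hterm : ∀ u v, w u v * (f u - f v) ^ 2 = 0 := fun u v =>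
    congrFun ((Fintype.sum_eq_zero_iff_of_nonneg (hnonneg u)).1 <| congrFun
      ((Fintype.sum_eq_zero_iff_of_nonneg fun u => Finset.sum_nonneg fun v _ =>
        hnonneg u v).1 hsum) u) v
  induction hpath with
  | refl => rfl
  | @tail b c _ hbc ih =>
    rw [ih]
    simpa [hbc.ne', sub_eq_zero] using hterm b c

namespace IsEnergyMinimizer

variable {x y : V} {g : V → ℝ}

theorem minEnergy_eq (hg : IsEnergyMinimizer w x y g) : minEnergy w x y = energy w g :=
  IsLeast.csInf_eq ⟨⟨g, hg.eq_zero, hg.eq_one, rfl⟩,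
    by rintro _ ⟨f, hfx, hfy, rfl⟩; exact hg.energy_le f hfx hfy⟩

theorem energy_pos (hw : ∀ u v, 0 ≤ w u v) (hg : IsEnergyMinimizer w x y g)
    (hpath : Relation.ReflTransGen (fun u v => 0 < w u v) x y) : 0 < energy w g :=
  (energy_nonneg hw g).lt_of_ne fun h => by
    simpa [hg.eq_zero, hg.eq_one] using eq_of_energy_eq_zero hw h.symm hpath

theorem energyForm_eq_zero (hg : IsEnergyMinimizer w x y g) {χ : V → ℝ} (hχx : χ x = 0)
    (hχy : χ y = 0) : energyForm w χ g = 0 := by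
  have h := discrim_le_zero (a := energy w χ) (b := 2 * energyForm w g χ) (c := 0) fun t => by
    have := hg.energy_le (g + t • χ) (by simp [hg.eq_zero, hχx]) (by simp [hg.eq_one, hχy])
    rw [energy_add_smul] at this
    linarith
  rw [discrim, energyForm_comm] at h
  exact pow_eq_zero_iff two_ne_zero |>.1 (by nlinarith [sq_nonneg (energyForm w χ g)])

theorem energyForm_eq (hg : IsEnergyMinimizer w x y g) (f : V → ℝ) :
    energyForm w f g = energy w g * (f y - f x) := by
  have h := hg.energyForm_eq_zero (χ := f - f x • 1 - (f y - f x) • g)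
    (by simp [hg.eq_zero]) (by simp [hg.eq_one])
  simp only [map_sub, map_smul, LinearMap.sub_apply, LinearMap.smul_apply, energyForm_one_left,
    energyForm_self, smul_eq_mul] at h
  linarith

end IsEnergyMinimizer

theorem minEnergy_pos (hw : ∀ u v, 0 ≤ w u v) {x y : V} (hxy : x ≠ y)
    (hpath : Relation.ReflTransGen (fun u v => 0 < w u v) x y) : 0 < minEnergy w x y := by
  obtain ⟨g, hg, -⟩ := exists_isEnergyMinimizer hw hxy
  exact hg.minEnergy_eq ▸ hg.energy_pos hw hpath

theorem minEnergy_comm (x y : V) : minEnergy w x y = minEnergy w y x := by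
  unfold minEnergy
  congr 1
  ext e
  constructor <;> rintro ⟨f, hfx, hfy, rfl⟩ <;>
    exact ⟨1 - f, by simp [hfy], by simp [hfx], (energy_one_sub f).symm⟩

theorem inv_minEnergy_le (hw : ∀ u v, 0 ≤ w u v) {x z : V} (hxz : x ≠ z) {u : V → ℝ}
    (hu : ∀ f, energyForm w f u = f z - f x) : (minEnergy w x z)⁻¹ ≤ u z - u x := by
  obtain ⟨g, hg, -⟩ := exists_isEnergyMinimizer hw hxz
  have hEu : energy w u = u z - u x := by rw [← energyForm_self, hu]
  have hcs := energyForm_sq_le hw g u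
  rw [hu, hg.eq_zero, hg.eq_one, hEu] at hcs
  have hpos : 0 < energy w g := (energy_nonneg hw g).lt_of_ne fun h => by
    rw [← h] at hcs; norm_num at hcs
  rw [hg.minEnergy_eq, inv_le_iff_one_le_mul₀' hpos]
  linarith

variable [DecidableEq V]

theorem effectiveResistance_nonneg (hw : ∀ u v, 0 ≤ w u v) (x y : V) :
    0 ≤ effectiveResistance w x y := by
  unfold effectiveResistance
  split_ifs
  · rfl
  · exact inv_nonneg.2 <| Real.sInf_nonneg <| by
      rintro _ ⟨f, -, -, rfl⟩
      exact energy_nonneg hw f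

theorem effectiveResistance_comm (x y : V) :
    effectiveResistance w x y = effectiveResistance w y x := by
  by_cases h : x = y
  · rw [h]
  · simp [effectiveResistance, h, Ne.symm h, minEnergy_comm x y]

theorem effectiveResistance_eq_zero_iff (hw : ∀ u v, 0 ≤ w u v) {x y : V}
    (hpath : Relation.ReflTransGen (fun u v => 0 < w u v) x y) :
    effectiveResistance w x y = 0 ↔ x = y := by
  by_cases h : x = y
  · simp [effectiveResistance, h]
  · simp [effectiveResistance, h, (minEnergy_pos hw h hpath).ne']

theorem effectiveResistance_triangle (hw : ∀ u v, 0 ≤ w u v) {x y z : V}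
    (hpath_xy : Relation.ReflTransGen (fun u v => 0 < w u v) x y)
    (hpath_yz : Relation.ReflTransGen (fun u v => 0 < w u v) y z) :
    effectiveResistance w x z ≤ effectiveResistance w x y + effectiveResistance w y z := by
  by_cases hxz : x = z
  · rw [effectiveResistance, if_pos hxz]
    exact add_nonneg (effectiveResistance_nonneg hw x y) (effectiveResistance_nonneg hw y z)
  by_cases hxy : x = y
  · simp [effectiveResistance, hxy]
  by_cases hyz : y = z
  · simp [effectiveResistance, hyz]
  obtain ⟨g₁, hg₁, hg₁01⟩ := exists_isEnergyMinimizer hw hxy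
  obtain ⟨g₂, hg₂, hg₂01⟩ := exists_isEnergyMinimizer hw hyz
  have hm₁ := hg₁.energy_pos hw hpath_xy
  have hm₂ := hg₂.energy_pos hw hpath_yz
  simp only [effectiveResistance, if_neg hxz, if_neg hxy, if_neg hyz, hg₁.minEnergy_eq,
    hg₂.minEnergy_eq]
  set u := (energy w g₁)⁻¹ • g₁ + (energy w g₂)⁻¹ • g₂
  have hu : ∀ f, energyForm w f u = f z - f x := fun f => by
    simp only [u, map_add, map_smul, smul_eq_mul, hg₁.energyForm_eq, hg₂.energyForm_eq]
    field_simp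
    ring
  refine (inv_minEnergy_le hw hxz hu).trans ?_
  have h₁ := mul_le_mul_of_nonneg_left (hg₁01 z).2 (inv_nonneg.2 hm₁.le)
  have h₂ := mul_nonneg (inv_nonneg.2 hm₂.le) (hg₂01 x).1
  simp only [u, Pi.add_apply, Pi.smul_apply, smul_eq_mul, hg₁.eq_zero, hg₂.eq_one]
  linarith

end ElectricalNetwork

theorem effective_resistance_is_metric_general {V : Type*} [Fintype V] [DecidableEq V]
    (w : V → V → ℝ)
    (hw0 : ∀ u v, 0 ≤ w u v)
    (hconn : ∀ x y : V, Relation.ReflTransGen (fun u v => 0 < w u v) x y)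
    (R : V → V → ℝ)
    (hR : ∀ x y, R x y = if x = y then 0 else
      (sInf {e : ℝ | ∃ f : V → ℝ, f x = 0 ∧ f y = 1 ∧
        e = (1 / 2) * ∑ u, ∑ v, w u v * (f u - f v) ^ 2})⁻¹) :
    (∀ x y, 0 ≤ R x y) ∧ (∀ x y, R x y = R y x) ∧
    (∀ x y, R x y = 0 ↔ x = y) ∧ (∀ x y z, R x z ≤ R x y + R y z) := by
  obtain rfl : R = effectiveResistance w := funext₂ hR
  exact ⟨effectiveResistance_nonneg hw0, effectiveResistance_comm,
    fun x y => effectiveResistance_eq_zero_iff hw0 (hconn x y),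
    fun x y z => effectiveResistance_triangle hw0 (hconn x y) (hconn y z)⟩

/-- Effective resistance of a connected finite weighted network is a metric.
Here `R x y = (min{E(f) : f x = 0, f y = 1})⁻¹` for `x ≠ y`, with
`E(f) = (1/2) ∑_{u,v} w u v (f u - f v)²`, and `R x x = 0`. -/
theorem effective_resistance_is_metric {V : Type*} [Fintype V] [DecidableEq V]
    (w : V → V → ℝ)
    (hw0 : ∀ u v, 0 ≤ w u v) (hsymm : ∀ u v, w u v = w v u) (hdiag : ∀ u, w u u = 0)
    (hconn : ∀ x y : V, Relation.ReflTransGen (fun u v => 0 < w u v) x y)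
    (R : V → V → ℝ)
    (hR : ∀ x y, R x y = if x = y then 0 else
      (sInf {e : ℝ | ∃ f : V → ℝ, f x = 0 ∧ f y = 1 ∧
        e = (1 / 2) * ∑ u, ∑ v, w u v * (f u - f v) ^ 2})⁻¹) :
    (∀ x y, 0 ≤ R x y) ∧ (∀ x y, R x y = R y x) ∧
    (∀ x y, R x y = 0 ↔ x = y) ∧ (∀ x y z, R x z ≤ R x y + R y z) :=
  effective_resistance_is_metric_general w hw0 hconn R hR
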